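/- Let f, Δ : [-π, π] → ℝ be measurable with 0 < c ≤ f(θ) ≤ C and |Δ(θ)| ≤ C almost everywhere for some constants c, C, and suppose (1/2π)∫_{-π}^{π} f(θ) dθ = 1. Set Q_KL := (1/2π)∫_{-π}^{π} Δ(θ)²/f(θ) dθ − ((1/2π)∫_{-π}^{π} Δ(θ) dθ)². Then there exist constants K > 0 and t0 > 0 such that for all real t with |t| ≤ t0 one has |δ_KL(f, f + tΔ) − (t²/2)·Q_KL| ≤ K·|t|³; that is, δ_KL(f, f + tΔ) = (t²/2)·Q_KL + O(|t|³) as t → 0. -/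
import Mathlib


open MeasureTheory Real Set

/-- The (normalized) Kullback–Leibler divergence between spectral densities:
`δ_KL(f1, f2) := (1/2π) ∫ f̂1 log(f̂1/f̂2) dθ` where `f̂i := fi / ((1/2π) ∫ fi dθ)`. -/
noncomputable def deltaKL (f1 f2 : ℝ → ℝ) : ℝ :=
  (2 * π)⁻¹ * ∫ θ in Icc (-π) π,
    (f1 θ / ((2 * π)⁻¹ * ∫ t in Icc (-π) π, f1 t)) *
      Real.log ((f1 θ / ((2 * π)⁻¹ * ∫ t in Icc (-π) π, f1 t)) /
        (f2 θ / ((2 * π)⁻¹ * ∫ t in Icc (-π) π, f2 t)))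

lemma log_quad_aux {x : ℝ} (hx : |x| ≤ 1/2) :
    |Real.log (1 + x) - (x - x ^ 2 / 2)| ≤ 2 * |x| ^ 3 := by
  have h1 : |(-x)| < 1 := by rw [abs_neg]; linarith
  have h2 := Real.abs_log_sub_add_sum_range_le h1 2
  have hsum : (∑ i ∈ Finset.range 2, (-x) ^ (i + 1) / (i + 1)) = -x + x ^ 2 / 2 := by
    simp [Finset.sum_range_succ]; ring
  rw [hsum, sub_neg_eq_add, abs_neg] at h2
  have heq : Real.log (1 + x) - (x - x ^ 2 / 2) = -x + x ^ 2 / 2 + Real.log (1 + x) := by ring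
  rw [heq]
  refine h2.trans ?_
  have hx3 : (0:ℝ) ≤ |x| ^ 3 := by positivity
  have : |x| ^ (2+1) / (1 - |x|) ≤ |x| ^ 3 / (1/2) := by
    apply div_le_div_of_nonneg_left hx3 (by norm_num) (by linarith)
  linarith [this]

/-- Second-order expansion of the Kullback–Leibler divergence:
for normalized `f`, `δ_KL(f, f + tΔ) = (t²/2)·Q_KL + O(|t|³)` as `t → 0`, where
`Q_KL = (1/2π)∫ Δ²/f dθ − ((1/2π)∫ Δ dθ)²`. -/
theorem deltaKL_quadratic_expansion (f Δ : ℝ → ℝ) (c C : ℝ) (hc : 0 < c)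
    (hmf : Measurable f) (hmΔ : Measurable Δ)
    (hf : ∀ᵐ θ ∂(volume.restrict (Icc (-π) π)), c ≤ f θ ∧ f θ ≤ C)
    (hΔ : ∀ᵐ θ ∂(volume.restrict (Icc (-π) π)), |Δ θ| ≤ C)
    (hnorm : (2 * π)⁻¹ * ∫ θ in Icc (-π) π, f θ = 1) :
    ∃ K > (0 : ℝ), ∃ t0 > (0 : ℝ), ∀ t : ℝ, |t| ≤ t0 →
      |deltaKL f (fun θ => f θ + t * Δ θ) -
          t ^ 2 / 2 * (((2 * π)⁻¹ * ∫ θ in Icc (-π) π, (Δ θ) ^ 2 / f θ) -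
            ((2 * π)⁻¹ * ∫ θ in Icc (-π) π, Δ θ) ^ 2)| ≤ K * |t| ^ 3 := by
  have hπ : (0:ℝ) < π := Real.pi_pos
  have hμuniv : (volume.restrict (Icc (-π) π)) univ = ENNReal.ofReal (2 * π) := by
    rw [Measure.restrict_apply_univ, Real.volume_Icc]
    congr 1; ring
  haveI : IsFiniteMeasure (volume.restrict (Icc (-π) π)) :=
    ⟨by rw [hμuniv]; exact ENNReal.ofReal_lt_top⟩
  have hμne : (volume.restrict (Icc (-π) π)) ≠ 0 := by
    rw [← Measure.measure_univ_ne_zero, hμuniv]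
    exact (ENNReal.ofReal_pos.mpr (by linarith)).ne'
  haveI : (ae (volume.restrict (Icc (-π) π))).NeBot := ae_neBot.mpr hμne
  obtain ⟨θ₀, h1, h2⟩ := hf.exists
  have hC : 0 < C := hc.trans_le (h1.trans h2)
  -- integrability facts
  have hIf : Integrable f (volume.restrict (Icc (-π) π)) :=
    ⟨hmf.aestronglyMeasurable, HasFiniteIntegral.of_bounded (C := C)
      (hf.mono fun θ h => by rw [Real.norm_eq_abs, abs_of_pos (hc.trans_le h.1)]; exact h.2)⟩
  have hIΔ : Integrable Δ (volume.restrict (Icc (-π) π)) :=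
    ⟨hmΔ.aestronglyMeasurable, HasFiniteIntegral.of_bounded (C := C)
      (hΔ.mono fun θ h => by rwa [Real.norm_eq_abs])⟩
  have hIq : Integrable (fun θ => (Δ θ) ^ 2 / f θ) (volume.restrict (Icc (-π) π)) := by
    refine ⟨((hmΔ.pow_const 2).div hmf).aestronglyMeasurable,
      HasFiniteIntegral.of_bounded (C := C^2/c) ?_⟩
    filter_upwards [hf, hΔ] with θ hfθ hΔθ
    rw [Real.norm_eq_abs, abs_div, abs_of_pos (hc.trans_le hfθ.1), abs_pow, sq_abs]
    refine div_le_div₀ (by positivity) ?_ hc hfθ.1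
    calc (Δ θ)^2 = |Δ θ|^2 := (sq_abs _).symm
      _ ≤ C^2 := pow_le_pow_left₀ (abs_nonneg _) hΔθ 2
  set m := (2 * π)⁻¹ * (∫ θ in Icc (-π) π, Δ θ) with hm_def
  have hm : |m| ≤ C := by
    have h1 : ‖∫ θ in Icc (-π) π, Δ θ‖ ≤ C * ((volume.restrict (Icc (-π) π)) univ).toReal :=
      norm_integral_le_of_norm_le_const (hΔ.mono fun θ h => by rwa [Real.norm_eq_abs])
    rw [hμuniv, ENNReal.toReal_ofReal (by positivity)] at h1
    rw [hm_def, abs_mul, abs_inv, abs_of_pos (by positivity : (0:ℝ) < 2*π)]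
    rw [Real.norm_eq_abs] at h1
    rw [inv_mul_le_iff₀ (by positivity)]
    calc |∫ θ in Icc (-π) π, Δ θ| ≤ C * (2*π) := h1
      _ = 2 * π * C := by ring
  set D := 2 * C^4 / c^3 with hD_def
  have hD : 0 < D := by positivity
  refine ⟨2 * C^3 + D, by positivity, min c 1 / (2 * C), by positivity, fun t ht => ?_⟩
  -- basic smallness facts
  have htC : |t| * C ≤ min c 1 / 2 := by
    have := mul_le_mul_of_nonneg_right ht (le_of_lt hC)
    calc |t| * C ≤ min c 1 / (2*C) * C := this
      _ = min c 1 / 2 := by field_simp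
  have htc : |t| * C ≤ c / 2 := htC.trans (by
    have : min c 1 ≤ c := min_le_left _ _
    linarith)
  have ht1 : |t| * C ≤ 1 / 2 := htC.trans (by
    have : min c 1 ≤ 1 := min_le_right _ _
    linarith)
  set g := fun θ => f θ + t * Δ θ with hg_def
  have hIg : Integrable g (volume.restrict (Icc (-π) π)) := hIf.add (hIΔ.const_mul t)
  set M := 1 + t * m with hM_def
  have hMint : (2 * π)⁻¹ * ∫ θ in Icc (-π) π, g θ = M := by
    rw [hM_def]
    have : ∫ θ in Icc (-π) π, g θ = (∫ θ in Icc (-π) π, f θ) + t * ∫ θ in Icc (-π) π, Δ θ := by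
      rw [hg_def]
      rw [integral_add hIf (hIΔ.const_mul t), integral_const_mul]
    rw [this, mul_add, hnorm, hm_def]
    ring
  have htm : |t * m| ≤ 1/2 := by
    rw [abs_mul]
    calc |t| * |m| ≤ |t| * C := by
          apply mul_le_mul_of_nonneg_left hm (abs_nonneg t)
      _ ≤ 1/2 := ht1
  have hM2 : (1:ℝ)/2 ≤ M := by
    have := abs_le.mp htm
    rw [hM_def]; linarith [this.1]
  have hMpos : 0 < M := by linarith
  -- the key pointwise function
  set h := fun θ => f θ * Real.log (1 + t * Δ θ / f θ) with hh_def
  -- a.e. properties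
  have hae : ∀ᵐ θ ∂(volume.restrict (Icc (-π) π)),
      (f θ / ((2 * π)⁻¹ * ∫ s in Icc (-π) π, f s)) *
      Real.log ((f θ / ((2 * π)⁻¹ * ∫ s in Icc (-π) π, f s)) /
        (g θ / ((2 * π)⁻¹ * ∫ s in Icc (-π) π, g s)))
      = f θ * Real.log M - h θ := by
    filter_upwards [hf, hΔ] with θ hfθ hΔθ
    have hfpos : 0 < f θ := hc.trans_le hfθ.1
    have htΔ : |t * Δ θ| ≤ c / 2 := by
      rw [abs_mul]
      calc |t| * |Δ θ| ≤ |t| * C := mul_le_mul_of_nonneg_left hΔθ (abs_nonneg t)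
        _ ≤ c/2 := htc
    have htΔ' := abs_le.mp htΔ
    have hg2 : c/2 ≤ g θ := by
      show c/2 ≤ f θ + t * Δ θ
      linarith [hfθ.1, htΔ'.1]
    have hgpos : 0 < g θ := lt_of_lt_of_le (by linarith) hg2
    have hxratio : g θ / f θ = 1 + t * Δ θ / f θ := by
      show (f θ + t * Δ θ) / f θ = 1 + t * Δ θ / f θ
      field_simp
    rw [hnorm, hMint]
    rw [div_one]
    rw [Real.log_div hfpos.ne' (by positivity : (g θ / M) ≠ 0)]
    rw [Real.log_div hgpos.ne' hMpos.ne']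
    rw [hh_def]
    simp only
    rw [← hxratio, Real.log_div hgpos.ne' hfpos.ne']
    ring
  have haee : ∀ᵐ θ ∂(volume.restrict (Icc (-π) π)),
      |h θ - (t * Δ θ - t^2/2 * ((Δ θ)^2 / f θ))| ≤ D * |t|^3 := by
    filter_upwards [hf, hΔ] with θ hfθ hΔθ
    have hfpos : 0 < f θ := hc.trans_le hfθ.1
    set x : ℝ := t * Δ θ / f θ with hx_def
    have hxabs : |x| ≤ |t| * C / c := by
      rw [hx_def, abs_div, abs_of_pos hfpos, abs_mul]
      apply div_le_div₀ (by positivity) (mul_le_mul_of_nonneg_left hΔθ (abs_nonneg t)) hc hfθ.1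
    have hxhalf : |x| ≤ 1/2 := hxabs.trans (by
      rw [div_le_iff₀ hc]
      calc |t| * C ≤ c/2 := htc
        _ = 1/2 * c := by ring)
    have hkey := log_quad_aux hxhalf
    have hrw : h θ - (t * Δ θ - t^2/2 * ((Δ θ)^2 / f θ))
        = f θ * (Real.log (1 + x) - (x - x^2/2)) := by
      rw [hh_def, hx_def]
      simp only
      field_simp
    rw [hrw, abs_mul, abs_of_pos hfpos]
    calc f θ * |Real.log (1 + x) - (x - x^2/2)| ≤ C * (2 * |x|^3) := by
          apply mul_le_mul hfθ.2 hkey (abs_nonneg _) (by linarith)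
      _ ≤ C * (2 * (|t| * C / c)^3) := by
          apply mul_le_mul_of_nonneg_left ?_ (le_of_lt hC)
          have := pow_le_pow_left₀ (abs_nonneg x) hxabs 3
          linarith
      _ = D * |t|^3 := by rw [hD_def]; field_simp
  -- integrability of h
  have hmh : Measurable h := by
    apply hmf.mul
    exact Real.measurable_log.comp (measurable_const.add ((measurable_const.mul hmΔ).div hmf))
  have hIlin : Integrable (fun θ => t * Δ θ - t^2/2 * ((Δ θ)^2 / f θ))
      (volume.restrict (Icc (-π) π)) :=
    (hIΔ.const_mul t).sub (hIq.const_mul (t^2/2))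
  have hIh : Integrable h (volume.restrict (Icc (-π) π)) := by
    refine ⟨hmh.aestronglyMeasurable,
      HasFiniteIntegral.of_bounded (C := D * |t|^3 + (|t| * C + t^2/2 * (C^2/c))) ?_⟩
    filter_upwards [haee, hf, hΔ] with θ he hfθ hΔθ
    have hfpos : 0 < f θ := hc.trans_le hfθ.1
    rw [Real.norm_eq_abs]
    have h2 : |t * Δ θ - t^2/2 * ((Δ θ)^2 / f θ)| ≤ |t| * C + t^2/2 * (C^2/c) := by
      refine (abs_sub _ _).trans ?_
      gcongr
      · rw [abs_mul]; exact mul_le_mul_of_nonneg_left hΔθ (abs_nonneg t)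
      · have hnn : |t^2/2| = t^2/2 := abs_of_nonneg (by positivity)
        rw [abs_mul, hnn, abs_div, abs_of_pos hfpos, abs_pow, sq_abs]
        apply mul_le_mul_of_nonneg_left ?_ (by positivity)
        refine div_le_div₀ (by positivity) ?_ hc hfθ.1
        calc (Δ θ)^2 = |Δ θ|^2 := (sq_abs _).symm
          _ ≤ C^2 := pow_le_pow_left₀ (abs_nonneg _) hΔθ 2
    calc |h θ| = |(h θ - (t * Δ θ - t^2/2 * ((Δ θ)^2 / f θ)))
          + (t * Δ θ - t^2/2 * ((Δ θ)^2 / f θ))| := by ring_nf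
      _ ≤ |h θ - (t * Δ θ - t^2/2 * ((Δ θ)^2 / f θ))|
          + |t * Δ θ - t^2/2 * ((Δ θ)^2 / f θ)| := abs_add_le _ _
      _ ≤ D * |t|^3 + (|t| * C + t^2/2 * (C^2/c)) := add_le_add he h2
  have hIe : Integrable (fun θ => h θ - (t * Δ θ - t^2/2 * ((Δ θ)^2 / f θ)))
      (volume.restrict (Icc (-π) π)) :=
    hIh.sub hIlin
  -- the error integral
  set E := (2*π)⁻¹ * (∫ θ in Icc (-π) π,
      (h θ - (t * Δ θ - t^2/2 * ((Δ θ)^2 / f θ)))) with hE_def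
  have hEbound : |E| ≤ D * |t|^3 := by
    have h1 : ‖∫ θ in Icc (-π) π, (h θ - (t * Δ θ - t^2/2 * ((Δ θ)^2 / f θ)))‖
        ≤ D * |t|^3 * ((volume.restrict (Icc (-π) π)) univ).toReal :=
      norm_integral_le_of_norm_le_const (haee.mono fun θ hθ => by rwa [Real.norm_eq_abs])
    rw [hμuniv, ENNReal.toReal_ofReal (by positivity), Real.norm_eq_abs] at h1
    rw [hE_def, abs_mul, abs_inv, abs_of_pos (by positivity : (0:ℝ) < 2*π)]
    rw [inv_mul_le_iff₀ (by positivity)]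
    calc |∫ θ in Icc (-π) π, (h θ - (t * Δ θ - t^2/2 * ((Δ θ)^2 / f θ)))|
        ≤ D * |t|^3 * (2*π) := h1
      _ = 2 * π * (D * |t|^3) := by ring
  -- compute deltaKL
  set q := (2 * π)⁻¹ * (∫ θ in Icc (-π) π, (Δ θ)^2 / f θ) with hq_def
  have hdelta : deltaKL f g = Real.log M - (E + t * m - t^2/2 * q) := by
    rw [deltaKL]
    have hint1 : ∫ θ in Icc (-π) π, (f θ / ((2 * π)⁻¹ * ∫ s in Icc (-π) π, f s)) *
        Real.log ((f θ / ((2 * π)⁻¹ * ∫ s in Icc (-π) π, f s)) /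
          (g θ / ((2 * π)⁻¹ * ∫ s in Icc (-π) π, g s)))
        = ∫ θ in Icc (-π) π, (f θ * Real.log M - h θ) :=
      integral_congr_ae hae
    rw [hint1]
    rw [integral_sub (hIf.mul_const _) hIh]
    rw [integral_mul_const]
    have hinth : ∫ θ in Icc (-π) π, h θ
        = (∫ θ in Icc (-π) π, (h θ - (t * Δ θ - t^2/2 * ((Δ θ)^2 / f θ))))
          + ((t * ∫ θ in Icc (-π) π, Δ θ) - t^2/2 * ∫ θ in Icc (-π) π, (Δ θ)^2 / f θ) := by
      have e1 : ∫ θ in Icc (-π) π, h θ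
          = (∫ θ in Icc (-π) π, (h θ - (t * Δ θ - t^2/2 * ((Δ θ)^2 / f θ))))
            + ∫ θ in Icc (-π) π, (t * Δ θ - t^2/2 * ((Δ θ)^2 / f θ)) := by
        rw [← integral_add hIe hIlin]
        congr 1
        ext θ
        ring
      have e2 : ∫ θ in Icc (-π) π, (t * Δ θ - t^2/2 * ((Δ θ)^2 / f θ))
          = (t * ∫ θ in Icc (-π) π, Δ θ) - t^2/2 * ∫ θ in Icc (-π) π, (Δ θ)^2 / f θ := by
        rw [integral_sub (hIΔ.const_mul t) (hIq.const_mul (t^2/2)),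
          integral_const_mul, integral_const_mul]
      rw [e1, e2]
    rw [hinth, hE_def, hq_def, hm_def]
    linear_combination (Real.log M) * hnorm
  rw [show deltaKL f (fun θ => f θ + t * Δ θ) = deltaKL f g from rfl, hdelta]
  have hmain : Real.log M - (E + t * m - t ^ 2 / 2 * q) - t ^ 2 / 2 * (q - m^2)
      = (Real.log (1 + t * m) - (t * m - (t*m)^2/2)) - E := by
    rw [hM_def]; ring
  rw [hmain]
  have hlog : |Real.log (1 + t * m) - (t * m - (t*m)^2/2)| ≤ 2 * C^3 * |t|^3 := by
    refine (log_quad_aux htm).trans ?_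
    have : |t * m|^3 ≤ (|t| * C)^3 := by
      apply pow_le_pow_left₀ (abs_nonneg _)
      rw [abs_mul]
      exact mul_le_mul_of_nonneg_left hm (abs_nonneg t)
    calc 2 * |t * m|^3 ≤ 2 * (|t| * C)^3 := by linarith
      _ = 2 * C^3 * |t|^3 := by ring
  calc |Real.log (1 + t * m) - (t * m - (t*m)^2/2) - E|
      ≤ |Real.log (1 + t * m) - (t * m - (t*m)^2/2)| + |E| := abs_sub _ _
    _ ≤ 2 * C^3 * |t|^3 + D * |t|^3 := add_le_add hlog hEbound
    _ = (2 * C^3 + D) * |t|^3 := by ring
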